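/- arXiv:2201.09930 — 5 statements merged into one kernel-verified Lean document; each statement's English description precedes it below -/
import Mathlib

section
/- Let M and N be R-modules. If N is M-K-nonsingular, then for every index set I the product module N^I is M-K-nonsingular. -/
section Defs

variable {R : Type*} [Ring R] {M : Type*} [AddCommGroup M] [Module R M]

/-- `K` is a direct summand of `M`. -/
def IsDirectSummand (K : Submodule R M) : Prop :=
  ∃ K' : Submodule R M, IsCompl K K'

/-- `X` is an essential submodule of `Y`. -/
def EssentialIn (X Y : Submodule R M) : Prop :=
  X ≤ Y ∧ ∀ Z : Submodule R M, Z ≤ Y → X ⊓ Z = ⊥ → Z = ⊥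

/-- `K` is a fully invariant submodule of `M`. -/
def FullyInvariant (K : Submodule R M) : Prop :=
  ∀ f : M →ₗ[R] M, K.map f ≤ K

/-- `L` lies above the direct summand `K`: `K` is a direct summand of `M`, `K ≤ L`
and `L/K` is superfluous (small) in `M/K`. -/
def LiesAbove (L K : Submodule R M) : Prop :=
  IsDirectSummand K ∧ K ≤ L ∧
    ∀ X : Submodule R M, K ≤ X → L ⊔ X = ⊤ → X = ⊤

/-- `lU(X)`: the set of endomorphisms of `M` vanishing on `X`. -/
def lU (X : Submodule R M) : Set (M →ₗ[R] M) :=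
  {f : M →ₗ[R] M | X ≤ LinearMap.ker f}

end Defs

section ModDefs

variable (R : Type*) [Ring R] (M : Type*) [AddCommGroup M] [Module R M]
  (N : Type*) [AddCommGroup N] [Module R N]

/-- `N` is `M`-CS-Rickart. -/
def CSRickart : Prop :=
  ∀ f : M →ₗ[R] N, ∃ K : Submodule R M,
    IsDirectSummand K ∧ EssentialIn (LinearMap.ker f) K

/-- `N` is `M`-CS-Baer. -/
def CSBaer : Prop :=
  ∀ (ι : Type*) (f : ι → (M →ₗ[R] N)), ∃ K : Submodule R M,
    IsDirectSummand K ∧ EssentialIn (⨅ i, LinearMap.ker (f i)) K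

/-- `N` is strongly `M`-CS-Baer. -/
def StrongCSBaer : Prop :=
  ∀ (ι : Type*) (f : ι → (M →ₗ[R] N)), ∃ K : Submodule R M,
    IsDirectSummand K ∧ FullyInvariant K ∧ EssentialIn (⨅ i, LinearMap.ker (f i)) K

/-- `N` is `M`-Baer. -/
def Baer : Prop :=
  ∀ (ι : Type*) (f : ι → (M →ₗ[R] N)),
    IsDirectSummand (⨅ i, LinearMap.ker (f i))

/-- `N` is `M`-𝒦-nonsingular. -/
def KNonsingular : Prop :=
  ∀ f : M →ₗ[R] N, EssentialIn (LinearMap.ker f) (⊤ : Submodule R M) → f = 0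

/-- every direct summand of `M` is fully invariant. -/
def WeakDuo : Prop :=
  ∀ K : Submodule R M, IsDirectSummand K → FullyInvariant K

/-- `M` is extending. -/
def Extending : Prop :=
  ∀ L : Submodule R M, ∃ K : Submodule R M, IsDirectSummand K ∧ EssentialIn L K

/-- `M` is lifting. -/
def Lifting : Prop :=
  ∀ L : Submodule R M, ∃ K : Submodule R M, LiesAbove L K

/-- `M` is dual self-CS-Rickart. -/
def DualSelfCSRickart : Prop :=
  ∀ f : M →ₗ[R] M, ∃ K : Submodule R M, LiesAbove (LinearMap.range f) K

/-- `M` is dual self-CS-Baer. -/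
def DualSelfCSBaer : Prop :=
  ∀ (ι : Type*) (f : ι → (M →ₗ[R] M)), ∃ K : Submodule R M,
    LiesAbove (⨆ i, LinearMap.range (f i)) K

/-- `M` is dual strongly self-CS-Baer. -/
def DualStrongSelfCSBaer : Prop :=
  ∀ (ι : Type*) (f : ι → (M →ₗ[R] M)), ∃ K : Submodule R M,
    FullyInvariant K ∧ LiesAbove (⨆ i, LinearMap.range (f i)) K

/-- `M` is SSIP-extending. -/
def SSIPExtending : Prop :=
  ∀ (ι : Type*) (A : ι → Submodule R M),
    (∀ i, ∃ K : Submodule R M, IsDirectSummand K ∧ EssentialIn (A i) K) →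
    ∃ K : Submodule R M, IsDirectSummand K ∧ EssentialIn (⨅ i, A i) K

/-- `M` is ESSIP. -/
def ESSIP : Prop :=
  ∀ (ι : Type*) (A : ι → Submodule R M), (∀ i, IsDirectSummand (A i)) →
    ∃ K : Submodule R M, IsDirectSummand K ∧ EssentialIn (⨅ i, A i) K

/-- The socle of `M`: the sum of all simple (atomic) submodules. -/
def Socle : Submodule R M := sSup {S : Submodule R M | IsAtom S}

/-- `M` is E-M-𝒦-cononsingular. -/
def ECononsingular : Prop :=
  ∀ X Y : Submodule R M, X ≤ Y → lU X = lU Y → EssentialIn X Y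

/-- `M` is E-M-𝒦-nonsingular. -/
def ENonsingular : Prop :=
  ∀ f : M →ₗ[R] M,
    (∃ K : Submodule R M, IsDirectSummand K ∧ EssentialIn (LinearMap.ker f) K) → f = 0

/-- `M` is nonsingular: the singular submodule vanishes. -/
def Nonsingular : Prop :=
  ∀ x : M, EssentialIn (LinearMap.ker (LinearMap.toSpanSingleton R M x))
      (⊤ : Submodule R R) → x = 0

end ModDefs

/-- `R` is semiperfect: `R/J(R)` is semisimple and idempotents lift modulo `J(R)`. -/
def IsSemiperfectRing (R : Type*) [Ring R] : Prop :=
  IsSemisimpleModule R (R ⧸ Ideal.jacobson (⊥ : Ideal R)) ∧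
    ∀ a : R, a * a - a ∈ Ideal.jacobson (⊥ : Ideal R) →
      ∃ e : R, IsIdempotentElem e ∧ e - a ∈ Ideal.jacobson (⊥ : Ideal R)

/-- `R` is semiregular: every principal (one-sided) ideal of `R` lies above a
direct summand of `R` as a module over itself. -/
def IsSemiregularRing (R : Type*) [Ring R] : Prop :=
  ∀ a : R, ∃ K : Submodule R R, LiesAbove (Submodule.span R {a}) K

/-- if `N` is `M`-𝒦-nonsingular then so is any power `N^I`. -/
theorem kNonsingular_pi
    {R : Type*} [Ring R] {M : Type*} [AddCommGroup M] [Module R M]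
    {N : Type*} [AddCommGroup N] [Module R N]
    (h : KNonsingular R M N) (ι : Type*) :
    KNonsingular R M (ι → N) := by
  intro f hf
  ext x i
  have hi : (LinearMap.proj i : (ι → N) →ₗ[R] N) ∘ₗ f = 0 := by
    apply h
    refine ⟨le_top, fun Z _ hZ => hf.2 Z le_top ?_⟩
    refine le_antisymm (le_trans ?_ hZ.le) bot_le
    exact inf_le_inf_right Z (fun m hm => by
      simp only [LinearMap.mem_ker] at hm ⊢
      simp [LinearMap.comp_apply, hm])
  simpa using LinearMap.congr_fun hi x
end

section
/- A ring R is a dual self-CS-Baer right R-module if and only if the right R-module R is lifting, if and only if R is semiperfect. -/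
/-!
Lifting trivially implies dual self-CS-Baer. Let `J` be the Jacobson radical. If `R` is dual
self-CS-Baer, every countably generated left ideal `E` lies above a summand `Re`, so `E ⊆ Re + J`
and the image of `E` in `R/J` is a direct summand. Every left ideal `L` is finitely generated
modulo `J`: otherwise it contains `y₀, y₁, …` with `yₖ ∉ Ry₀ + ⋯ + Ryₖ₋₁ + J`, and the idempotent
`e` of the left ideal they generate already lies in a finite stage, which bounds all later `yₖ`
modulo `J`. Hence every left ideal of `R/J` is a direct summand. For `a² ≡ a`, the idempotent
`e ∈ Ra` with `Ra ⊆ Re + J` satisfies `ae ≡ a` and `ea ≡ e`, so `e + (1 - e)ae` is an idempotent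
lift of `a`.

Conversely, if `R` is semiperfect, a complement of the image of `L` in `R/J` yields `a ∈ L` with
`L ⊆ Ra + J`; conjugating an idempotent lift `g` of `a` by the unit `1 + g(a - g)` gives an
idempotent `e ∈ Ra` with `L ⊆ Re + J`, and `L` lies above `Re` since `J` is small in `R`.
-/

universe u v w

open Submodule

theorem IsCompl.eq_top_of_inf_sup_eq_top {α : Type*} [Lattice α] [BoundedOrder α]
    [IsModularLattice α] {K K' L X : α} (hc : IsCompl K K')
    (hL : ∀ Y, K ≤ Y → L ⊔ Y = ⊤ → Y = ⊤) (hX : L ⊓ K' ⊔ X = ⊤) : X = ⊤ := by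
  have hK' : L ⊓ K' ⊔ X ⊓ K' = K' := by
    rw [← sup_inf_assoc_of_le X inf_le_right, hX, top_inf_eq]
  have hKX : K ⊔ X ⊓ K' = ⊤ := by
    refine hL _ le_sup_left (eq_top_iff.2 ?_)
    rw [← hc.sup_eq_top]
    refine sup_le (le_sup_of_le_right le_sup_left) ?_
    calc K' = L ⊓ K' ⊔ X ⊓ K' := hK'.symm
      _ ≤ L ⊔ (K ⊔ X ⊓ K') := sup_le_sup inf_le_left le_sup_right
  have hK'X : K' ≤ X := calc
    K' = (X ⊓ K' ⊔ K) ⊓ K' := by rw [sup_comm, hKX, top_inf_eq]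
    _ = X ⊓ K' := by rw [sup_inf_assoc_of_le K inf_le_right, hc.inf_eq_bot, sup_bot_eq]
    _ ≤ X := inf_le_left
  rwa [sup_eq_right.2 (inf_le_right.trans hK'X)] at hX

section Module

variable {R : Type u} {M : Type v} [Ring R] [AddCommGroup M] [Module R M]

theorem Submodule.le_jacobson_of_forall_sup_eq_top {N : Submodule R M}
    (hN : ∀ X, N ⊔ X = ⊤ → X = ⊤) : N ≤ Module.jacobson R M :=
  le_sInf fun m hm => by
    by_contra h
    exact hm.1 (hN m (hm.2 _ (right_lt_sup.2 h)))

theorem LiesAbove.le_sup_jacobson {L K : Submodule R M} (h : LiesAbove L K) :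
    L ≤ K ⊔ Module.jacobson R M := by
  obtain ⟨⟨K', hc⟩, hKL, hsmall⟩ := h
  have hsmall' : L ⊓ K' ≤ Module.jacobson R M :=
    le_jacobson_of_forall_sup_eq_top fun _ => hc.eq_top_of_inf_sup_eq_top hsmall
  calc L = K ⊔ L ⊓ K' := by
        rw [inf_comm, ← sup_inf_assoc_of_le K' hKL, hc.sup_eq_top, top_inf_eq]
    _ ≤ K ⊔ Module.jacobson R M := sup_le_sup_left hsmall' K

theorem LiesAbove.map_mkQ_eq {L K : Submodule R M} (h : LiesAbove L K) :
    L.map (Module.jacobson R M).mkQ = K.map (Module.jacobson R M).mkQ := by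
  refine le_antisymm (map_le_iff_le_comap.2 ?_) (map_mono h.2.1)
  rw [comap_map_mkQ, sup_comm]
  exact h.le_sup_jacobson

theorem Lifting.dualSelfCSBaer (h : Lifting R M) : DualSelfCSBaer.{u, v, w} R M :=
  fun _ _ => h _

theorem DualSelfCSBaer.exists_liesAbove_iSup_range (h : DualSelfCSBaer.{u, v, w} R M)
    {ι : Type*} [Small.{w} ι] (f : ι → M →ₗ[R] M) :
    ∃ K, LiesAbove (⨆ i, LinearMap.range (f i)) K := by
  obtain ⟨K, hK⟩ := h (Shrink.{w} ι) (f ∘ (equivShrink ι).symm)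
  exact ⟨K, (equivShrink ι).symm.iSup_comp (g := fun i => LinearMap.range (f i)) ▸ hK⟩

end Module

section Ring

variable {R : Type u} [Ring R]

theorem DualSelfCSBaer.exists_liesAbove_span (h : DualSelfCSBaer.{u, u, w} R R) (s : Set R)
    [Small.{w} s] : ∃ K, LiesAbove (span R s) K := by
  simpa only [← LinearMap.span_singleton_eq_range, ← span_iUnion, Set.iUnion_of_singleton_coe]
    using h.exists_liesAbove_iSup_range fun x : s => LinearMap.toSpanSingleton R R x

theorem IsIdempotentElem.mem_span_singleton_iff {e x : R} (he : IsIdempotentElem e) :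
    x ∈ span R {e} ↔ x * e = x := by
  refine ⟨fun h => ?_, fun h => mem_span_singleton.2 ⟨x, h⟩⟩
  obtain ⟨r, rfl⟩ := mem_span_singleton.1 h
  rw [smul_eq_mul, mul_assoc, he.eq]

theorem IsIdempotentElem.isCompl_span_singleton {e : R} (he : IsIdempotentElem e) :
    IsCompl (span R {e}) (span R {1 - e}) := by
  refine ⟨disjoint_def.2 fun x hx hx' => ?_, codisjoint_iff.2 (eq_top_iff.2 fun x _ => ?_)⟩
  · rw [he.mem_span_singleton_iff] at hx
    rw [he.one_sub.mem_span_singleton_iff, mul_sub, mul_one, hx, sub_self] at hx'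
    exact hx'.symm
  · exact mem_sup.2 ⟨x * e, smul_mem _ x (mem_span_singleton_self e),
      x * (1 - e), smul_mem _ x (mem_span_singleton_self _), by noncomm_ring⟩

theorem exists_isIdempotentElem_of_isCompl {K K' : Submodule R R} (hc : IsCompl K K') :
    ∃ e, IsIdempotentElem e ∧ K = span R {e} ∧ K' = span R {1 - e} := by
  have mul_eq_self : ∀ {A B : Submodule R R}, IsCompl A B → ∀ {a b : R}, a ∈ A → b ∈ B →
      a + b = 1 → ∀ x ∈ A, x * a = x := by
    intro A B hAB a b ha hb hab x hx
    have hxb : x * b = 0 := disjoint_def.1 hAB.disjoint _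
      (by rw [← sub_eq_of_eq_add' (by rw [← mul_add, hab, mul_one] : x = x * a + x * b)]
          exact A.sub_mem hx (A.smul_mem x ha))
      (B.smul_mem x hb)
    rw [← add_zero (x * a), ← hxb, ← mul_add, hab, mul_one]
  obtain ⟨e, he, e', he', hee⟩ := mem_sup.1 (hc.sup_eq_top ▸ mem_top : (1 : R) ∈ K ⊔ K')
  have hidem : IsIdempotentElem e := mul_eq_self hc he he' hee e he
  obtain rfl : e' = 1 - e := eq_sub_of_add_eq' hee
  refine ⟨e, hidem, ?_, ?_⟩
  · ext x
    rw [hidem.mem_span_singleton_iff]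
    exact ⟨mul_eq_self hc he he' hee x, fun h => h ▸ K.smul_mem x he⟩
  · ext x
    rw [hidem.one_sub.mem_span_singleton_iff]
    exact ⟨mul_eq_self hc.symm he' he (by rw [add_comm, hee]) x,
      fun h => h ▸ K'.smul_mem x he'⟩

theorem IsCompl.map_mkQ {K K' : Submodule R R} (hc : IsCompl K K') (I : Ideal R)
    [I.IsTwoSided] : IsCompl (K.map I.mkQ) (K'.map I.mkQ) := by
  obtain ⟨e, he, rfl, rfl⟩ := exists_isIdempotentElem_of_isCompl hc
  refine ⟨disjoint_def.2 ?_, codisjoint_iff.2 ?_⟩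
  · rintro _ ⟨k, hk, rfl⟩ ⟨k', hk', hkk'⟩
    rw [SetLike.mem_coe, he.mem_span_singleton_iff] at hk
    rw [SetLike.mem_coe, he.one_sub.mem_span_singleton_iff, mul_sub, mul_one,
      sub_eq_self] at hk'
    have hkI : k - k' ∈ I := by
      rw [← Submodule.ker_mkQ I, LinearMap.mem_ker, map_sub, hkk', sub_self]
    have : k = (k - k') * e := by rw [sub_mul, hk, hk', sub_zero]
    rw [LinearMap.mem_ker.1 ((Submodule.ker_mkQ I).symm ▸ this ▸ I.mul_mem_right e hkI)]
  · rw [← Submodule.map_sup, hc.sup_eq_top, Submodule.map_top, range_mkQ]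

theorem Ring.isUnit_of_sub_one_mem_jacobson {u : R} (hu : u - 1 ∈ Ring.jacobson R) : IsUnit u := by
  have left_inv : ∀ v : R, v - 1 ∈ Ring.jacobson R → ∃ s, s * v = 1 := fun v hv => by
    rw [← Ideal.jacobson_bot] at hv
    obtain ⟨s, hs⟩ := Ideal.exists_mul_sub_mem_of_sub_one_mem_jacobson v hv
    exact ⟨s, sub_eq_zero.1 ((Submodule.mem_bot R).1 hs)⟩
  obtain ⟨s, hs⟩ := left_inv u hu
  obtain ⟨t, ht⟩ := left_inv s <| by
    have : s - 1 = -(s * (u - 1)) := by rw [mul_sub, hs]; noncomm_ring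
    exact this ▸ neg_mem (Ideal.mul_mem_left _ s hu)
  have htu : t = u := by rw [← mul_one t, ← hs, ← mul_assoc, ht, one_mul]
  exact ⟨⟨u, s, htu ▸ ht, hs⟩, rfl⟩

theorem Ring.eq_top_of_jacobson_sup_eq_top {X : Ideal R} (h : Ring.jacobson R ⊔ X = ⊤) : X = ⊤ := by
  by_contra hX
  obtain ⟨m, hm, hXm⟩ := Ideal.exists_le_maximal X hX
  exact hm.ne_top (top_le_iff.1 (h ▸ sup_le (Ring.jacobson_le_of_isMaximal m) hXm))

theorem IsIdempotentElem.sub_mul_mem_of_mem_span_sup {e x : R} (he : IsIdempotentElem e)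
    {I : Ideal R} [I.IsTwoSided] (hx : x ∈ span R {e} ⊔ I) : x - x * e ∈ I := by
  obtain ⟨y, hy, j, hj, rfl⟩ := mem_sup.1 hx
  rw [he.mem_span_singleton_iff] at hy
  rw [add_mul, hy, add_sub_add_left_eq_sub]
  exact I.sub_mem hj (I.mul_mem_right e hj)

theorem IsIdempotentElem.add_one_sub_mul_mul {e : R} (he : IsIdempotentElem e) (x : R) :
    IsIdempotentElem (e + (1 - e) * x * e) := by
  have h : e * (1 - e) = 0 := he.mul_one_sub_self
  calc (e + (1 - e) * x * e) * (e + (1 - e) * x * e)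
      = e * e + e * (1 - e) * x * e + (1 - e) * x * (e * e)
        + (1 - e) * x * (e * (1 - e)) * x * e := by noncomm_ring
    _ = e + (1 - e) * x * e := by rw [he.eq, h]; noncomm_ring

theorem IsSemiregularRing.exists_isIdempotentElem_sub_mem_jacobson (h : IsSemiregularRing R)
    {a : R} (ha : a * a - a ∈ Ring.jacobson R) :
    ∃ e, IsIdempotentElem e ∧ e - a ∈ Ring.jacobson R := by
  obtain ⟨K, hK⟩ := h a
  obtain ⟨K', hc⟩ := hK.1
  obtain ⟨e, he, rfl, -⟩ := exists_isIdempotentElem_of_isCompl hc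
  obtain ⟨v, hv⟩ := mem_span_singleton.1 (hK.2.1 (mem_span_singleton_self e))
  have hae : a - a * e ∈ Ring.jacobson R :=
    he.sub_mul_mem_of_mem_span_sup (hK.le_sup_jacobson (mem_span_singleton_self a))
  refine ⟨e + (1 - e) * a * e, he.add_one_sub_mul_mul a, ?_⟩
  set q := Ideal.Quotient.mk (Ring.jacobson R)
  rw [← Ideal.Quotient.eq_zero_iff_mem] at ha hae ⊢
  simp only [map_sub, map_add, map_mul, map_one, sub_eq_zero] at ha hae ⊢
  have hee : q e * q e = q e := by rw [← map_mul, he.eq]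
  have hea : q e * q a = q e := by rw [← hv, smul_eq_mul, map_mul, mul_assoc, ha]
  calc q e + (1 - q e) * q a * q e = q e + (q a * q e - q e * q a * q e) := by noncomm_ring
    _ = q a := by rw [← hae, hea, hee, add_sub_cancel]

theorem LiesAbove.exists_le_sup_jacobson_of_directed {ι : Type*} [Nonempty ι]
    {E : ι → Submodule R R} (hE : Directed (· ≤ ·) E) {K : Submodule R R}
    (h : LiesAbove (⨆ i, E i) K) : ∃ i, ⨆ i, E i ≤ E i ⊔ Ring.jacobson R := by
  obtain ⟨K', hc⟩ := h.1
  obtain ⟨e, -, rfl, -⟩ := exists_isIdempotentElem_of_isCompl hc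
  obtain ⟨i, hi⟩ := (mem_iSup_of_directed E hE).1 (h.2.1 (mem_span_singleton_self e))
  exact ⟨i, h.le_sup_jacobson.trans (sup_le_sup_right (span_singleton_le_iff_mem e _ |>.2 hi) _)⟩

theorem exists_finset_le_span_sup_jacobson
    (h : ∀ s : Set R, s.Countable → ∃ K, LiesAbove (span R s) K) (L : Submodule R R) :
    ∃ s : Finset R, ↑s ⊆ (L : Set R) ∧ L ≤ span R s ⊔ Ring.jacobson R := by
  classical
  by_contra! hL
  have step : ∀ s : Finset R, ∃ y, ↑s ⊆ (L : Set R) → y ∈ L ∧ y ∉ span R s ⊔ Ring.jacobson R := by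
    intro s
    by_cases hs : ↑s ⊆ (L : Set R)
    · obtain ⟨y, hyL, hy⟩ := SetLike.not_le_iff_exists.1 (hL s hs)
      exact ⟨y, fun _ => ⟨hyL, hy⟩⟩
    · exact ⟨0, fun h => absurd h hs⟩
  choose next hnext using step
  let s : ℕ → Finset R := fun k => (fun t => insert (next t) t)^[k] ∅
  have hs_succ : ∀ k, s (k + 1) = insert (next (s k)) (s k) :=
    fun k => Function.iterate_succ_apply' _ k ∅
  have hsL : ∀ k, ↑(s k) ⊆ (L : Set R) := by
    intro k
    induction k with
    | zero => simp [s]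
    | succ k ih => rw [hs_succ, Finset.coe_insert]; exact Set.insert_subset (hnext _ ih).1 ih
  have hmono : Monotone fun k => span R (s k : Set R) := monotone_nat_of_le_succ fun k =>
    span_mono (hs_succ k ▸ Finset.coe_subset.2 (Finset.subset_insert _ _))
  obtain ⟨K, hK⟩ := h (⋃ k, ↑(s k)) (Set.countable_iUnion fun k => (s k).countable_toSet)
  rw [span_iUnion] at hK
  obtain ⟨m, hm⟩ := hK.exists_le_sup_jacobson_of_directed hmono.directed_le
  refine (hnext (s m) (hsL m)).2 (hm (mem_iSup_of_mem (m + 1) (subset_span ?_)))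
  rw [hs_succ, Finset.coe_insert]
  exact Set.mem_insert _ _

theorem isSemisimpleModule_quotient_jacobson
    (h : ∀ s : Set R, s.Countable → ∃ K, LiesAbove (span R s) K) :
    IsSemisimpleModule R (R ⧸ Ring.jacobson R) := by
  refine (isSemisimpleModule_iff _ _).2 ⟨fun N => ?_⟩
  let π := (Ring.jacobson R).mkQ
  obtain ⟨s, hsN, hNs⟩ := exists_finset_le_span_sup_jacobson h (N.comap π)
  obtain ⟨K, hK⟩ := h s s.countable_toSet
  obtain ⟨K', hc⟩ := hK.1
  have hN : N = (span R s).map π := by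
    refine le_antisymm ?_ (map_le_iff_le_comap.2 (span_le.2 hsN))
    rwa [← comap_le_comap_iff_of_surjective (mkQ_surjective _), comap_map_mkQ, sup_comm]
  exact ⟨_, hN ▸ hK.map_mkQ_eq ▸ hc.map_mkQ _⟩

theorem exists_mem_forall_sub_mul_mem {I : Submodule R R} [IsSemisimpleModule R (R ⧸ I)]
    (L : Submodule R R) : ∃ a ∈ L, ∀ x ∈ L, x - x * a ∈ I := by
  obtain ⟨C, hC⟩ := exists_isCompl (L.map I.mkQ)
  obtain ⟨_, ⟨a, haL, rfl⟩, c, hc, hac⟩ :=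
    mem_sup.1 (hC.sup_eq_top ▸ mem_top : I.mkQ 1 ∈ L.map I.mkQ ⊔ C)
  refine ⟨a, haL, fun x hx => ?_⟩
  have hxc : I.mkQ (x - x * a) = x • c := by
    rw [← mul_one_sub, ← smul_eq_mul, map_smul, map_sub, ← hac, add_sub_cancel_left]
  rw [← ker_mkQ I, LinearMap.mem_ker]
  exact disjoint_def.1 hC.disjoint _ (mem_map_of_mem (L.sub_mem hx (L.smul_mem x haL)))
    (hxc ▸ C.smul_mem x hc)

theorem exists_isIdempotentElem_mem_span_singleton_sub_mem_jacobson {a g : R}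
    (hg : IsIdempotentElem g) (hga : g - a ∈ Ring.jacobson R) :
    ∃ e, IsIdempotentElem e ∧ e ∈ span R {a} ∧ e - a ∈ Ring.jacobson R := by
  have hag : a - g ∈ Ring.jacobson R := neg_sub g a ▸ neg_mem hga
  obtain ⟨u, hu⟩ := Ring.isUnit_of_sub_one_mem_jacobson (u := 1 + g * (a - g))
    (by rw [add_sub_cancel_left]; exact Ideal.mul_mem_left _ g hag)
  have hgu : g * u = g * a := by rw [hu, mul_add, mul_one, ← mul_assoc, hg.eq, mul_sub, hg.eq]; abel
  refine ⟨↑u⁻¹ * g * u, ?_, ?_, ?_⟩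
  · calc ↑u⁻¹ * g * u * (↑u⁻¹ * g * u) = ↑u⁻¹ * g * (↑u * ↑u⁻¹) * g * u := by noncomm_ring
      _ = ↑u⁻¹ * g * u := by rw [u.mul_inv, mul_one, mul_assoc _ g g, hg.eq]
  · rw [mul_assoc, hgu, ← mul_assoc]
    exact smul_mem _ _ (mem_span_singleton_self a)
  · set q := Ideal.Quotient.mk (Ring.jacobson R)
    have hqu : q u = 1 := by
      rw [hu, map_add, map_one, add_eq_left, Ideal.Quotient.eq_zero_iff_mem]
      exact Ideal.mul_mem_left _ g hag
    have hqu' : q ↑u⁻¹ = 1 := calc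
      q ↑u⁻¹ = q ↑u⁻¹ * q u := by rw [hqu, mul_one]
      _ = 1 := by rw [← map_mul, u.inv_mul, map_one]
    rw [← Ideal.Quotient.eq_zero_iff_mem, map_sub, map_mul, map_mul, hqu, hqu', one_mul,
      mul_one, ← map_sub, Ideal.Quotient.eq_zero_iff_mem]
    exact hga

theorem liesAbove_span_singleton_of_isIdempotentElem {L : Submodule R R} {e : R}
    (he : IsIdempotentElem e) (heL : e ∈ L) (hL : L ≤ span R {e} ⊔ Ring.jacobson R) :
    LiesAbove L (span R {e}) := by
  refine ⟨⟨_, he.isCompl_span_singleton⟩, (span_singleton_le_iff_mem e L).2 heL,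
    fun X heX hLX => Ring.eq_top_of_jacobson_sup_eq_top (eq_top_iff.2 ?_)⟩
  calc ⊤ = L ⊔ X := hLX.symm
    _ ≤ span R {e} ⊔ Ring.jacobson R ⊔ X := sup_le_sup_right hL X
    _ ≤ Ring.jacobson R ⊔ X := sup_le (sup_le (heX.trans le_sup_right) le_sup_left) le_sup_right

theorem isSemiperfectRing_iff : IsSemiperfectRing R ↔
    IsSemisimpleModule R (R ⧸ Ring.jacobson R) ∧ ∀ a : R, a * a - a ∈ Ring.jacobson R →
      ∃ e, IsIdempotentElem e ∧ e - a ∈ Ring.jacobson R := by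
  rw [IsSemiperfectRing, Ideal.jacobson_bot]

theorem IsSemiperfectRing.lifting (h : IsSemiperfectRing R) : Lifting R R := by
  obtain ⟨hss, hlift⟩ := isSemiperfectRing_iff.1 h
  intro L
  obtain ⟨a, haL, ha⟩ := exists_mem_forall_sub_mul_mem (I := Ring.jacobson R) L
  obtain ⟨g, hg, hga⟩ := hlift a (neg_sub a (a * a) ▸ neg_mem (ha a haL))
  obtain ⟨e, he, hea, hea'⟩ := exists_isIdempotentElem_mem_span_singleton_sub_mem_jacobson hg hga
  refine ⟨_, liesAbove_span_singleton_of_isIdempotentElem he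
    ((span_singleton_le_iff_mem a L).2 haL hea) fun x hx => mem_sup.2
      ⟨x * e, smul_mem _ x (mem_span_singleton_self e), x - x * e, ?_, add_sub_cancel _ _⟩⟩
  have : x - x * e = (x - x * a) - x * (e - a) := by noncomm_ring
  exact this ▸ sub_mem (ha x hx) (Ideal.mul_mem_left _ x hea')

-- The index types in `DualSelfCSBaer` live in an arbitrary universe `w`, possibly smaller than
-- that of `R`, so only countable families can be used.
theorem DualSelfCSBaer.isSemiperfectRing (h : DualSelfCSBaer.{u, u, w} R R) :
    IsSemiperfectRing R := by
  have hcount : ∀ s : Set R, s.Countable → ∃ K, LiesAbove (span R s) K := fun s hs =>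
    have := hs.to_subtype
    h.exists_liesAbove_span s
  have hreg : IsSemiregularRing R := fun a => hcount {a} (Set.countable_singleton a)
  exact isSemiperfectRing_iff.2 ⟨isSemisimpleModule_quotient_jacobson hcount,
    fun _ => hreg.exists_isIdempotentElem_sub_mem_jacobson⟩

end Ring

/-- a ring is dual self-CS-Baer as a module over itself iff it is
lifting as a module over itself, iff it is semiperfect. -/
theorem dualSelfCSBaer_iff_lifting_iff_semiperfect (R : Type*) [Ring R] :
    (DualSelfCSBaer R R ↔ Lifting R R) ∧ (Lifting R R ↔ IsSemiperfectRing R) :=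
  ⟨⟨fun h => h.isSemiperfectRing.lifting, Lifting.dualSelfCSBaer⟩,
    fun h => (Lifting.dualSelfCSBaer.{_, _, 0} h).isSemiperfectRing, IsSemiperfectRing.lifting⟩
end

section
/- Let R be a commutative ring. Then every cyclic dual self-CS-Baer R-module is lifting. -/
/-!
Over a commutative ring every endomorphism of a cyclic module `M = R y` is multiplication by a
scalar, so every submodule is fully invariant. Hence sums of direct summands are direct summands,
and every cyclic submodule `R l`, being the image of an endomorphism, lies above a summand.

The index type in `DualSelfCSBaer` lives in an arbitrary universe, so only families indexed by
`PUnit` and `ULift ℕ` are at hand, not the family of all endomorphisms with image in `L`.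
Applied to the projections onto an ascending chain of summands, the hypothesis gives ACC on
summands, because summands of `M` are finitely generated. So every submodule `L` contains a
greatest summand `K`. If `K ≤ X` and `L + X = M`, write `y = l + x` with `l ∈ L` and let `R l`
lie above `K₀`: then `K₀ ≤ K ≤ X` and `R l + X = M`, so `X = M`.
-/

open Submodule

section Summands

variable {R : Type*} [Ring R] {M : Type*} [AddCommGroup M] [Module R M]

theorem FullyInvariant.inf_sup_inf_eq {N K K' : Submodule R M} (hN : FullyInvariant N)
    (hc : IsCompl K K') : N ⊓ K ⊔ N ⊓ K' = N := by
  refine le_antisymm (sup_le inf_le_left inf_le_left) fun x hx => ?_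
  have hpx : K.projection K' hc x ∈ N := hN _ ⟨x, hx, rfl⟩
  rw [← add_sub_cancel (K.projection K' hc x) x]
  refine add_mem (mem_sup_left ⟨hpx, projection_apply_mem hc x⟩)
    (mem_sup_right ⟨sub_mem hx hpx, ?_⟩)
  rw [← projection_eq_self_sub_projection hc]
  exact projection_apply_mem _ x

theorem IsDirectSummand.sup (hduo : WeakDuo R M) {K N : Submodule R M}
    (hK : IsDirectSummand K) (hN : IsDirectSummand N) : IsDirectSummand (K ⊔ N) := by
  obtain ⟨K', hKK'⟩ := hK
  obtain ⟨N', hNN'⟩ := hN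
  have hN_split := (hduo N ⟨N', hNN'⟩).inf_sup_inf_eq hKK'
  have hK'_split := (hduo K' ⟨K, hKK'.symm⟩).inf_sup_inf_eq hNN'
  have hKN : K ⊔ N = N ⊓ K' ⊔ K := by
    refine le_antisymm (sup_le le_sup_right ?_) (sup_le_sup_right inf_le_left K |>.trans
      (sup_comm _ _).le)
    calc N = N ⊓ K ⊔ N ⊓ K' := hN_split.symm
      _ ≤ N ⊓ K' ⊔ K := sup_le (inf_le_right.trans le_sup_right) le_sup_left
  refine ⟨K' ⊓ N', disjoint_iff.2 ?_, codisjoint_iff.2 (eq_top_iff.2 ?_)⟩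
  · calc (K ⊔ N) ⊓ (K' ⊓ N') = (N ⊓ K' ⊔ K) ⊓ K' ⊓ N' := by rw [hKN, inf_assoc]
      _ = N ⊓ K' ⊓ N' := by
          rw [sup_inf_assoc_of_le _ inf_le_right, hKK'.inf_eq_bot, sup_bot_eq]
      _ = ⊥ := eq_bot_iff.2 <| (inf_le_inf_right _ inf_le_left).trans hNN'.inf_eq_bot.le
  · calc ⊤ = K ⊔ (K' ⊓ N ⊔ K' ⊓ N') := by rw [hK'_split, hKK'.sup_eq_top]
      _ ≤ K ⊔ N ⊔ K' ⊓ N' := by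
          rw [← sup_assoc]
          exact sup_le_sup_right (sup_le_sup_left inf_le_right _) _

theorem IsDirectSummand.fg [Module.Finite R M] {K : Submodule R M} (hK : IsDirectSummand K) :
    K.FG := by
  obtain ⟨K', hc⟩ := hK
  rw [← range_projection hc, LinearMap.range_eq_map]
  exact Module.Finite.fg_top.map _

/-- If `Kₘ ⊇ Kₙ` are summands, `Cₘ` a complement of `Kₘ`, and the summand above `⨆ Kᵢ` lies in
`Kₙ`, then `Kₙ ⊔ Cₘ = ⊤`, and the modular law gives `Kₘ = Kₙ`. -/
theorem DualSelfCSBaer.wellFoundedGT_summand [Module.Finite R M] (h : DualSelfCSBaer R M) :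
    WellFoundedGT {K : Submodule R M // IsDirectSummand K} := by
  refine wellFoundedGT_iff_monotone_chain_condition.2 fun a => ?_
  choose C hC using fun n => (a n).2
  obtain ⟨K, hK, hK_le, hsmall⟩ := h (ULift ℕ) fun n => (a n.down).1.projection _ (hC n.down)
  simp only [range_projection, iSup_ulift] at hK_le hsmall
  have hmono : Monotone fun n => (a n).1 := fun _ _ hnm => a.monotone hnm
  obtain ⟨_, ⟨n, rfl⟩, hKn⟩ := (CompleteLattice.isCompactElement_iff_le_of_directed_sSup_le _ _).1
    ((fg_iff_compact _).1 hK.fg) _ (Set.range_nonempty _) hmono.directed_le.directedOn_range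
    (by rwa [sSup_range])
  refine ⟨n, fun m hnm => Subtype.ext <| le_antisymm (hmono hnm) (le_of_eq ?_)⟩
  have hX : (a n).1 ⊔ C m = ⊤ := by
    refine hsmall _ (hKn.trans le_sup_left) (eq_top_iff.2 ?_)
    rw [← (hC m).sup_eq_top]
    exact sup_le_sup (le_iSup (fun i => (a i).1) m) le_sup_right
  calc (a m).1 = ((a n).1 ⊔ C m) ⊓ (a m).1 := by rw [hX, top_inf_eq]
    _ = (a n).1 := by rw [sup_inf_assoc_of_le _ (hmono hnm), (hC m).symm.inf_eq_bot, sup_bot_eq]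

theorem DualSelfCSBaer.exists_isGreatest_summand_le [Module.Finite R M] (h : DualSelfCSBaer R M)
    (hduo : WeakDuo R M) (L : Submodule R M) :
    ∃ K, IsGreatest {K | IsDirectSummand K ∧ K ≤ L} K := by
  have := h.wellFoundedGT_summand
  obtain ⟨K, hKL, hmax⟩ := wellFounded_gt.has_min {K : {K // IsDirectSummand K} | K.1 ≤ L}
    ⟨⟨⊥, ⊤, isCompl_bot_top⟩, (bot_le : ⊥ ≤ L)⟩
  refine ⟨K.1, ⟨K.2, hKL⟩, fun N ⟨hN, hNL⟩ => ?_⟩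
  have hKN : K = ⟨K.1 ⊔ N, K.2.sup hduo hN⟩ :=
    (show K ≤ ⟨K.1 ⊔ N, _⟩ from le_sup_left (b := N)).eq_of_not_lt (hmax _ (sup_le hKL hNL))
  exact le_sup_right.trans (congrArg Subtype.val hKN).ge

theorem liesAbove_of_isGreatest {y : M} (hy : span R {y} = ⊤) {L K : Submodule R M}
    (hL : ∀ l ∈ L, ∃ K₀, LiesAbove (span R {l}) K₀)
    (hK : IsGreatest {K | IsDirectSummand K ∧ K ≤ L} K) : LiesAbove L K := by
  refine ⟨hK.1.1, hK.1.2, fun X hKX hLX => ?_⟩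
  obtain ⟨l, hl, x, hx, rfl⟩ := mem_sup.1 (hLX ▸ mem_top : y ∈ L ⊔ X)
  obtain ⟨K₀, hK₀, hK₀l, hsmall⟩ := hL l hl
  refine hsmall X ((hK.2 ⟨hK₀, hK₀l.trans ((span_singleton_le_iff_mem _ _).2 hl)⟩).trans hKX) ?_
  rw [eq_top_iff, ← hy, span_singleton_le_iff_mem]
  exact add_mem_sup (mem_span_singleton_self l) hx

end Summands

section Cyclic

variable {R : Type*} [CommRing R] {M : Type*} [AddCommGroup M] [Module R M] {y : M}

theorem Module.End.exists_eq_smul_of_span_singleton_eq_top (hy : span R {y} = ⊤)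
    (f : Module.End R M) : ∃ a : R, ∀ m, f m = a • m := by
  obtain ⟨a, ha⟩ := mem_span_singleton.1 (hy ▸ mem_top : f y ∈ span R {y})
  refine ⟨a, fun m => ?_⟩
  obtain ⟨r, rfl⟩ := mem_span_singleton.1 (hy ▸ mem_top : m ∈ span R {y})
  rw [map_smul, ← ha, smul_comm]

theorem fullyInvariant_of_span_singleton_eq_top (hy : span R {y} = ⊤) (N : Submodule R M) :
    FullyInvariant N := by
  intro f
  obtain ⟨a, ha⟩ := Module.End.exists_eq_smul_of_span_singleton_eq_top hy f
  rintro _ ⟨m, hm, rfl⟩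
  rw [ha]
  exact N.smul_mem a hm

theorem range_smul_id_eq_span_singleton (hy : span R {y} = ⊤) (a : R) :
    LinearMap.range (a • LinearMap.id : Module.End R M) = span R {a • y} := by
  rw [LinearMap.range_eq_map, ← hy, map_span, Set.image_singleton]
  rfl

theorem DualSelfCSBaer.exists_liesAbove_span_singleton (h : DualSelfCSBaer R M)
    (hy : span R {y} = ⊤) (l : M) : ∃ K, LiesAbove (span R {l}) K := by
  obtain ⟨a, rfl⟩ := mem_span_singleton.1 (hy ▸ mem_top : l ∈ span R {y})
  obtain ⟨K, hK⟩ := h PUnit fun _ => a • LinearMap.id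
  rw [iSup_const, range_smul_id_eq_span_singleton hy] at hK
  exact ⟨K, hK⟩

end Cyclic

/-- over a commutative ring, every cyclic dual self-CS-Baer module
is lifting. -/
theorem cyclic_dualSelfCSBaer_is_lifting
    {R : Type*} [CommRing R] {M : Type*} [AddCommGroup M] [Module R M]
    (hcyc : ∃ y : M, Submodule.span R {y} = ⊤)
    (h : DualSelfCSBaer R M) :
    Lifting R M := by
  obtain ⟨y, hy⟩ := hcyc
  have : Module.Finite R M := .of_fg_top ⟨{y}, by simpa using hy⟩
  intro L
  obtain ⟨K, hK⟩ :=
    h.exists_isGreatest_summand_le (fun N _ => fullyInvariant_of_span_singleton_eq_top hy N) L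
  exact ⟨K, liesAbove_of_isGreatest hy (fun l _ => h.exists_liesAbove_span_singleton hy l) hK⟩
end

section
/- Every injective module over a Dedekind domain is dual self-CS-Baer; in fact, for every family (f_λ) of endomorphisms of an injective module M over a Dedekind domain, the submodule ∑_λ im(f_λ) is a direct summand of M. -/
/-!
The sum `∑ᵢ im fᵢ` is the image of `⊕ᵢ M` under `(mᵢ) ↦ ∑ᵢ fᵢ mᵢ`. Over a Noetherian ring a
direct sum of Baer modules is Baer, since a map from a finitely generated ideal lands in finitely
many summands; as ideals of a Dedekind domain are projective, maps from ideals into a quotient of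
a Baer module lift, so the image is Baer too. Hence it is injective, and an injective submodule is
a direct summand.

Baer's criterion only applies to `M : Type v` when `R` is `v`-small, which holds once `M ≠ 0`
because `M` is then faithful: if `a ≠ 0` killed `M`, take `y ≠ 0` whose annihilator is a maximal
ideal `P`, so that `R ⧸ P ≅ R ∙ y` and hence every `R ⧸ P ^ N` is small, and `N` with `a ∉ P ^ N`.
Multiplication by `a` embeds `R ⧸ (P ^ N : a)` into `R ⧸ P ^ N`, and `(P ^ N : a) ≤ P`, so
extending `1 ↦ y` along it yields `z` with `a • z = y`, which is absurd.
-/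
open LinearMap
open scoped nonZeroDivisors

universe u v

theorem Ideal.projective_of_isDedekindDomain {R : Type*} [CommRing R] [IsDedekindDomain R]
    (I : Ideal R) : Module.Projective R I := by
  rcases eq_or_ne I ⊥ with rfl | hI
  · infer_instance
  have hunit : IsUnit (I : FractionalIdeal R⁰ (FractionRing R)) :=
    isUnit_iff_ne_zero.mpr (FractionalIdeal.coeIdeal_ne_zero.mpr hI)
  have := Submodule.projective_of_isUnit (hunit.map (FractionalIdeal.coeSubmoduleHom _ _))
  rw [FractionalIdeal.coeSubmoduleHom_apply, FractionalIdeal.coe_coeIdeal,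
    IsLocalization.coeSubmodule] at this
  exact Module.Projective.of_equiv
    (Submodule.equivMapOfInjective (Algebra.linearMap R (FractionRing R))
      (IsFractionRing.injective R (FractionRing R)) I).symm

theorem Submodule.FG.exists_le_supported {R ι M : Type*} [Semiring R] [AddCommMonoid M]
    [Module R M] {W : Submodule R (ι →₀ M)} (hW : W.FG) :
    ∃ s : Finset ι, W ≤ Finsupp.supported M R ↑s := by
  classical
  obtain ⟨T, rfl⟩ := hW
  exact ⟨T.sup Finsupp.support, Submodule.span_le.mpr fun v hv =>
    (Finsupp.mem_supported R v).mpr (Finset.coe_subset.mpr (Finset.le_sup hv))⟩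

namespace Module.Baer

variable {R : Type*} [Ring R] {M : Type*} [AddCommGroup M] [Module R M]

theorem pi (h : Baer R M) (α : Type*) : Baer R (α → M) := by
  intro I g
  choose E hE using fun a => h I (LinearMap.proj a ∘ₗ g)
  exact ⟨LinearMap.pi E, fun x hx => funext fun a => hE a x hx⟩

theorem finsupp [IsNoetherianRing R] (h : Baer R M) (ι : Type*) : Baer R (ι →₀ M) := by
  intro I g
  obtain ⟨s, hs⟩ := (Module.Finite.iff_fg.mp (Module.Finite.range g)).exists_le_supported
  let e := (Finsupp.supportedEquivFinsupp (M := M) (R := R) (s : Set ι)).trans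
    (Finsupp.linearEquivFunOnFinite R M s)
  obtain ⟨G, hG⟩ := of_equiv e.symm (h.pi s) I (g.codRestrict _ fun x => hs ⟨x, rfl⟩)
  exact ⟨(Finsupp.supported M R ↑s).subtype ∘ₗ G, fun x hx => by simp [hG x hx]⟩

theorem of_surjective [∀ I : Ideal R, Module.Projective R I] {N : Type*} [AddCommGroup N]
    [Module R N] (hN : Baer R N) {f : N →ₗ[R] M} (hf : Function.Surjective f) : Baer R M := by
  intro I g
  obtain ⟨ℓ, hℓ⟩ := projective_lifting_property f g hf
  obtain ⟨e, he⟩ := hN I ℓ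
  exact ⟨f ∘ₗ e, fun x hx => by simp [he x hx, ← hℓ]⟩

end Module.Baer

theorem Finsupp.range_lsum {R ι M N : Type*} [Semiring R] [AddCommMonoid M] [Module R M]
    [AddCommMonoid N] [Module R N] (f : ι → M →ₗ[R] N) :
    range (Finsupp.lsum ℕ f) = ⨆ i, range (f i) := by
  rw [range_eq_map, ← Finsupp.iSup_lsingle_range, Submodule.map_iSup]
  simp_rw [← range_comp, Finsupp.lsum_comp_lsingle]

theorem Submodule.isDirectSummand_of_injective {R M : Type*} [Ring R] [AddCommGroup M]
    [Module R M] (N : Submodule R M) [Module.Injective R N] : IsDirectSummand N := by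
  obtain ⟨r, hr⟩ := Module.Injective.out N.subtype Subtype.val_injective LinearMap.id
  exact ⟨ker r, isCompl_of_proj hr⟩

theorem isDirectSummand_iSup_range_of_baer {R : Type*} [CommRing R] [IsDedekindDomain R]
    {M : Type*} [AddCommGroup M] [Module R M] (hM : Module.Baer R M) {ι : Type*}
    (f : ι → M →ₗ[R] M) : IsDirectSummand (⨆ i, range (f i)) := by
  have := Ideal.projective_of_isDedekindDomain (R := R)
  rw [← Finsupp.range_lsum]
  have := ((hM.finsupp ι).of_surjective (Finsupp.lsum ℕ f).surjective_rangeRestrict).injective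
  exact Submodule.isDirectSummand_of_injective _

theorem Ideal.small_quotient_mul {R : Type u} [CommRing R] {I J : Ideal R} (hI : I.FG)
    [Small.{v} (R ⧸ I)] [Small.{v} (R ⧸ J)] : Small.{v} (R ⧸ I * J) := by
  obtain ⟨s, rfl⟩ := hI
  refine small_of_surjective (f := fun p : (R ⧸ span (s : Set R)) × (s → R ⧸ J) =>
    Quotient.mk _ (p.1.out + ∑ i : s, (p.2 i).out * i)) fun x => ?_
  obtain ⟨x, rfl⟩ := Quotient.mk_surjective x
  set u := (Quotient.mk (span (s : Set R)) x).out with hu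
  obtain ⟨c, -, hc⟩ := Submodule.mem_span_finset.mp
    (Quotient.eq.mp (Quotient.mk_out (Quotient.mk (span (s : Set R)) x)).symm)
  refine ⟨(Quotient.mk _ x, fun i => Quotient.mk J (c i)), Quotient.eq.mpr ?_⟩
  rw [← Finset.sum_coe_sort s, eq_sub_iff_add_eq'] at hc
  rw [← hu, ← hc, add_sub_add_left_eq_sub, ← Finset.sum_sub_distrib]
  refine sum_mem _ fun i _ => ?_
  rw [smul_eq_mul, ← sub_mul, mul_comm _ (i : R)]
  exact mul_mem_mul (subset_span i.2) (Quotient.eq.mp (Quotient.mk_out _))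

theorem Ideal.small_quotient_pow {R : Type u} [CommRing R] [IsNoetherianRing R] (P : Ideal R)
    [Small.{v} (R ⧸ P)] (n : ℕ) : Small.{v} (R ⧸ P ^ n) := by
  induction n with
  | zero => rw [pow_zero, one_eq_top]; infer_instance
  | succ n ih => rw [pow_succ]; exact small_quotient_mul (IsNoetherian.noetherian _)

theorem Ideal.IsMaximal.le_of_pow_le {R : Type*} [CommRing R] {P J : Ideal R} (hP : P.IsMaximal)
    {n : ℕ} (h : P ^ n ≤ J) (hJ : J ≠ ⊤) : J ≤ P := by
  obtain ⟨Q, hQ, hJQ⟩ := J.exists_le_maximal hJ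
  have := hQ.isPrime
  rwa [hP.eq_of_le hQ.ne_top (IsPrime.le_of_pow_le (h.trans hJQ))]

theorem Module.Injective.exists_extension_of_small {R : Type u} [Ring R] {Q : Type v}
    [AddCommGroup Q] [Module R Q] [Module.Injective R Q] {X Y : Type*} [AddCommGroup X]
    [Module R X] [AddCommGroup Y] [Module R Y] [Small.{v} X] [Small.{v} Y] {f : X →ₗ[R] Y}
    (hf : Function.Injective f) (g : X →ₗ[R] Q) : ∃ h : Y →ₗ[R] Q, h ∘ₗ f = g := by
  let eX := Shrink.linearEquiv.{v} R X
  let eY := Shrink.linearEquiv.{v} R Y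
  obtain ⟨h, hh⟩ := Module.Injective.out (eY.symm.toLinearMap ∘ₗ f ∘ₗ eX.toLinearMap)
    (eY.symm.injective.comp (hf.comp eX.injective)) (g ∘ₗ eX.toLinearMap)
  exact ⟨h ∘ₗ eY.symm.toLinearMap, LinearMap.ext fun x => by simpa using hh (eX.symm x)⟩

theorem Module.Injective.exists_smul_ne_zero {R : Type u} [CommRing R] [IsDomain R]
    [IsNoetherianRing R] [Ring.DimensionLEOne R] {M : Type v} [AddCommGroup M] [Module R M]
    [Module.Injective R M] [Nontrivial M] {a : R} (ha : a ≠ 0) : ∃ m : M, a • m ≠ 0 := by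
  by_contra! haM
  obtain ⟨P, hP⟩ := associatedPrimes.nonempty R M
  obtain ⟨hPprime, y, hPy⟩ := isAssociatedPrime_iff.mp hP
  have hy : P = ker (toSpanSingleton R M y) := by
    ext r; simp [hPy, Submodule.mem_colon_singleton]
  have hPmax : P.IsMaximal := hPprime.isMaximal fun hP0 => ha <| by
    simpa [hP0] using (hy ▸ haM y : a ∈ P)
  have : Small.{v} (R ⧸ P) :=
    small_of_injective (ker_eq_bot.mp (Submodule.ker_liftQ_eq_bot' _ _ hy))
  obtain ⟨N, haN⟩ : ∃ N, a ∉ P ^ N := by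
    by_contra! h
    simpa [Ideal.iInf_pow_eq_bot_of_isDomain P hPmax.ne_top, ha] using
      (Submodule.mem_iInf _).mpr h
  have := Ideal.small_quotient_pow.{u, v} P N
  let t := toSpanSingleton R (R ⧸ P ^ N) (Submodule.Quotient.mk a)
  have ht : Function.Injective ((ker t).liftQ t le_rfl) :=
    ker_eq_bot.mp (Submodule.ker_liftQ_eq_bot _ _ _ le_rfl)
  have : Small.{v} (R ⧸ ker t) := small_of_injective ht
  have hkert : ∀ r, r ∈ ker t ↔ r * a ∈ P ^ N := fun r => by
    rw [mem_ker, toSpanSingleton_apply, ← Submodule.Quotient.mk_smul,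
      Submodule.Quotient.mk_eq_zero, smul_eq_mul]
  have hker : ker t ≤ ker (toSpanSingleton R M y) := hy ▸ hPmax.le_of_pow_le (n := N)
    (fun r hr => (hkert r).mpr (Ideal.mul_mem_right a _ hr))
    (fun h => haN (by simpa using (hkert 1).mp (h ▸ Submodule.mem_top)))
  obtain ⟨φ, hφ⟩ := exists_extension_of_small ht ((ker t).liftQ (toSpanSingleton R M y) hker)
  have hya : y = a • φ (Submodule.Quotient.mk 1) := by
    have h1 := LinearMap.congr_fun hφ (Submodule.Quotient.mk 1)
    simp only [comp_apply, Submodule.liftQ_apply, t, toSpanSingleton_apply, one_smul] at h1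
    rw [← h1, ← map_smul, ← Submodule.Quotient.mk_smul, smul_eq_mul, mul_one]
  exact hPprime.ne_top (by simp [hy, hya, haM])

theorem small_of_faithfulSMul (R : Type u) (M : Type v) [SMul R M] [FaithfulSMul R M] :
    Small.{v} R :=
  small_of_injective (f := fun (r : R) (m : M) => r • m) fun _ _ h =>
    FaithfulSMul.eq_of_smul_eq_smul (congr_fun h)

theorem Module.Injective.faithfulSMul {R : Type u} [CommRing R] [IsDomain R]
    [IsNoetherianRing R] [Ring.DimensionLEOne R] {M : Type v} [AddCommGroup M] [Module R M]
    [Module.Injective R M] [Nontrivial M] : FaithfulSMul R M := by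
  refine ⟨fun {a b} hab => by_contra fun hne => ?_⟩
  obtain ⟨m, hm⟩ := exists_smul_ne_zero (M := M) (sub_ne_zero.mpr hne)
  exact hm (by rw [sub_smul, hab, sub_self])

theorem isDirectSummand_iSup_range_of_injective {R : Type u} [CommRing R] [IsDedekindDomain R]
    {M : Type v} [AddCommGroup M] [Module R M] [Module.Injective R M] {ι : Type*}
    (f : ι → M →ₗ[R] M) : IsDirectSummand (⨆ i, range (f i)) := by
  cases subsingleton_or_nontrivial M
  · exact ⟨⊥, Subsingleton.elim (⨆ i, range (f i)) ⊤ ▸ isCompl_top_bot⟩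
  · have : FaithfulSMul R M := Module.Injective.faithfulSMul
    have := small_of_faithfulSMul R M
    exact isDirectSummand_iSup_range_of_baer (Module.Baer.of_injective ‹_›) f

theorem liesAbove_self {R M : Type*} [Ring R] [AddCommGroup M] [Module R M]
    {K : Submodule R M} (hK : IsDirectSummand K) : LiesAbove K K :=
  ⟨hK, le_rfl, fun X hKX hX => by rwa [sup_eq_right.mpr hKX] at hX⟩

theorem injective_dedekind_dualSelfCSBaer_general
    {R : Type*} [CommRing R] [IsDedekindDomain R]
    (M : Type*) [AddCommGroup M] [Module R M] [Module.Injective R M] :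
    DualSelfCSBaer R M ∧
      ∀ (ι : Type*) (f : ι → (M →ₗ[R] M)),
        IsDirectSummand (⨆ i, LinearMap.range (f i)) :=
  ⟨fun _ f => ⟨_, liesAbove_self (isDirectSummand_iSup_range_of_injective f)⟩,
    fun _ f => isDirectSummand_iSup_range_of_injective f⟩

/-- every injective module over a Dedekind domain is dual
self-CS-Baer; in fact the sum of the images of any family of endomorphisms is a
direct summand. -/
theorem injective_dedekind_dualSelfCSBaer
    {R : Type*} [CommRing R] [IsDomain R] [IsDedekindDomain R]
    (M : Type*) [AddCommGroup M] [Module R M] [Module.Injective R M] :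
    DualSelfCSBaer R M ∧
      ∀ (ι : Type*) (f : ι → (M →ₗ[R] M)),
        IsDirectSummand (⨆ i, LinearMap.range (f i)) :=
  injective_dedekind_dualSelfCSBaer_general M
end

section
/- If M is a dual strongly self-CS-Baer module, then every direct summand of M is fully invariant; consequently, M has no direct summand isomorphic to N ⊕ N for a nonzero module N. -/
/-!
A direct summand `K` is the range of the projection onto it. A summand `L` lying above `K`
must equal `K`, by the modular law against a complement of `K`, so `K` inherits the full
invariance of `L`. For the second part, being weak duo passes to retracts, and `N × N` is
not weak duo: the swap moves the summand `N × 0` off itself.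
-/

open LinearMap Submodule

section

variable {R : Type*} [Ring R] {M : Type*} [AddCommGroup M] [Module R M]

theorem LiesAbove.eq_of_isDirectSummand {K L : Submodule R M} (hK : IsDirectSummand K)
    (h : LiesAbove K L) : L = K := by
  obtain ⟨K', hc⟩ := hK
  obtain ⟨-, hLK, hsmall⟩ := h
  have hsup : L ⊔ K' = ⊤ :=
    hsmall _ le_sup_left (by rw [sup_left_comm, hc.sup_eq_top, sup_top_eq])
  calc L = L ⊔ K' ⊓ K := by rw [hc.symm.inf_eq_bot, sup_bot_eq]
    _ = (L ⊔ K') ⊓ K := (sup_inf_assoc_of_le K' hLK).symm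
    _ = K := by rw [hsup, top_inf_eq]

theorem weakDuo_of_dualStrongSelfCSBaer (h : DualStrongSelfCSBaer R M) : WeakDuo R M := by
  rintro K ⟨K', hc⟩
  obtain ⟨L, hL, hLK⟩ := h PUnit fun _ => K.projection K' hc
  rw [iSup_const, range_projection] at hLK
  rwa [← hLK.eq_of_isDirectSummand ⟨K', hc⟩]

theorem WeakDuo.of_retract {P : Type*} [AddCommGroup P] [Module R P] (hM : WeakDuo R M)
    (i : P →ₗ[R] M) (r : M →ₗ[R] P) (hri : r ∘ₗ i = LinearMap.id) : WeakDuo R P := by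
  rintro A ⟨A', hc⟩ g
  have hri' : ∀ x, r (i x) = x := fun x => congr($hri x)
  have hi : Function.Injective i := Function.LeftInverse.injective hri'
  have hr : Function.Surjective r := Function.RightInverse.surjective hri'
  set q : Module.End R M := i ∘ₗ A.projection A' hc ∘ₗ r
  have hq : IsIdempotentElem q := by
    ext x
    simp only [q, Module.End.mul_apply, LinearMap.comp_apply, hri']
    rw [← Module.End.mul_apply, (isIdempotentElem_projection hc).eq]
  have hrange : range q = A.map i := by
    rw [range_comp, range_comp, range_eq_top.mpr hr, Submodule.map_top, range_projection]
  have hconj : (i ∘ₗ g ∘ₗ r) ∘ₗ i = i ∘ₗ g := by rw [comp_assoc, comp_assoc, hri, comp_id]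
  have hinv := hM _ ⟨_, hq.isCompl⟩ (i ∘ₗ g ∘ₗ r)
  rwa [hrange, ← Submodule.map_comp, hconj, Submodule.map_comp,
    Submodule.map_le_map_iff_of_injective hi] at hinv

theorem WeakDuo.of_isDirectSummand_equiv {P : Type*} [AddCommGroup P] [Module R P]
    (hM : WeakDuo R M) {K : Submodule R M} (hK : IsDirectSummand K) (e : K ≃ₗ[R] P) :
    WeakDuo R P := by
  obtain ⟨K', hc⟩ := hK
  refine hM.of_retract (K.subtype ∘ₗ e.symm.toLinearMap)
    (e.toLinearMap ∘ₗ K.projectionOnto K' hc) (LinearMap.ext fun x => ?_)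
  simp

end

theorem not_weakDuo_prod_self {R : Type*} [Ring R] {N : Type*} [AddCommGroup N] [Module R N]
    [Nontrivial N] : ¬ WeakDuo R (N × N) := by
  intro h
  obtain ⟨n, hn⟩ := exists_ne (0 : N)
  have hswap := h _ ⟨_, isCompl_range_inl_inr⟩ (LinearEquiv.prodComm R N N).toLinearMap
  obtain ⟨_, hm⟩ := hswap ⟨(n, 0), ⟨n, rfl⟩, rfl⟩
  exact hn (congr($hm.2)).symm

/-- in a dual strongly self-CS-Baer module every direct summand is
fully invariant; consequently no direct summand is isomorphic to `N ⊕ N` for a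
nonzero module `N`. -/
theorem dualStrongSelfCSBaer_weakDuo_no_square_summand
    {R : Type*} [Ring R] {M : Type*} [AddCommGroup M] [Module R M]
    (h : DualStrongSelfCSBaer R M) :
    WeakDuo R M ∧
      ∀ (N : Type*) [AddCommGroup N] [Module R N], Nontrivial N →
        ∀ K : Submodule R M, IsDirectSummand K → ¬ Nonempty (K ≃ₗ[R] (N × N)) := by
  have hwd := weakDuo_of_dualStrongSelfCSBaer h
  exact ⟨hwd, fun N _ _ _ K hK ⟨e⟩ => not_weakDuo_prod_self (hwd.of_isDirectSummand_equiv hK e)⟩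
end
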